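/- If m is even, then W_f(0) = −2^m. -/

import Mathlib

open Finset

/-- Absolute trace-style sum `Tr_n : F → F` for `n = 2m`. -/
def trN (m : ℕ) {F : Type*} [Field F] (x : F) : F :=
  ∑ i ∈ Finset.range (2 * m), x ^ (2 ^ i)

/-- Trace-style sum `Tr_m : F → F` (meant for elements of the subfield `K`). -/
def trM (m : ℕ) {F : Type*} [Field F] (x : F) : F :=
  ∑ i ∈ Finset.range m, x ^ (2 ^ i)

/-- `ε(0) = 1`, `ε(t) = -1` for `t ≠ 0`. -/
def eps {F : Type*} [Field F] [DecidableEq F] (t : F) : ℤ :=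
  if t = 0 then 1 else -1

/-- Kloosterman sum `k_m(μ) = ∑_{x ∈ K, x ≠ 0} χ_m(x + μ x⁻¹)`. -/
def klooM (m : ℕ) {F : Type*} [Field F] [Fintype F] [DecidableEq F] (μ : F) : ℤ :=
  ∑ x ∈ Finset.univ.filter (fun x : F => x ^ (2 ^ m) = x ∧ x ≠ 0),
    eps (trM m (x + μ * x⁻¹))

/-- Kloosterman sum over the big field: `k_n(μ) = ∑_{x ∈ F, x ≠ 0} χ_n(x + μ x⁻¹)`. -/
def klooN (m : ℕ) {F : Type*} [Field F] [Fintype F] [DecidableEq F] (μ : F) : ℤ :=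
  ∑ x ∈ Finset.univ.filter (fun x : F => x ≠ 0), eps (trN m (x + μ * x⁻¹))

/-- Walsh transform of `h : F → F` (with values in `{0,1}`) at `a`. -/
def walsh (m : ℕ) {F : Type*} [Field F] [Fintype F] [DecidableEq F] (h : F → F) (a : F) : ℤ :=
  ∑ x : F, eps (h x + trN m (a * x))

/-- The Boolean function `f_{λ,μ}(x) = Tr_n(λ x^{2^m+1}) + Tr_n(x)·Tr_n(μ x^{2^m-1})`. -/
def fFun (m : ℕ) {F : Type*} [Field F] (l μ : F) : F → F :=
  fun x => trN m (l * x ^ (2 ^ m + 1)) + trN m x * trN m (μ * x ^ (2 ^ m - 1))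

/-- The Boolean function
`g_{λ,μ}(x) = (1 + Tr_n(x))·Tr_n(λ x^{2^m+1}) + Tr_n(x)·Tr_n(μ x^{2^m-1})`. -/
def gFun (m : ℕ) {F : Type*} [Field F] (l μ : F) : F → F :=
  fun x => (1 + trN m x) * trN m (l * x ^ (2 ^ m + 1)) +
    trN m x * trN m (μ * x ^ (2 ^ m - 1))

/-!
Every `x ≠ 0` of `F = 𝔽_{2^{2m}}` is uniquely `x = s * u` with `s ∈ Kˣ` and `u` in the unit
circle `U = {u | u ^ (2^m + 1) = 1}`. With `t = u + u⁻¹ ∈ K` one finds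
`f (s * u) = Tr_m s + Tr_m (t * s) * Tr_m (μ * t ^ 2)`, so for fixed `u` the map `s ↦ f (s * u)` is
the linear form `s ↦ Tr_m (c * s)` with `c = 1` or `c = 1 + t`. For even `m`, `t ≠ 1`: otherwise
`u ^ 3 = 1`, and as `3` is prime to `2^m + 1` this forces `u = 1`, `t = 0`. So `c ≠ 0`, and each of
the `2^m + 1` sums over `Kˣ` equals `-1`. Hence `W_f(0) = 1 - (2^m + 1) = -2^m`.
-/

open Polynomial in
lemma card_filter_pow_eq_one {F : Type*} [Field F] [Fintype F] [DecidableEq F] {k : ℕ}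
    (hk : k ∣ Fintype.card F - 1) : #{x : F | x ^ k = 1} = k := by
  have hN : Fintype.card F - 1 ≠ 0 := by
    have := Fintype.one_lt_card (α := F); omega
  have hk0 : 0 < k := Nat.pos_of_ne_zero (by rintro rfl; exact hN (zero_dvd_iff.mp hk))
  obtain ⟨g, hg⟩ := IsCyclic.exists_ofOrder_eq_natCard (α := Fˣ)
  have hgen : IsPrimitiveRoot (g : F) (Fintype.card F - 1) := by
    rw [IsPrimitiveRoot.iff_orderOf, orderOf_units, hg, Nat.card_eq_fintype_card,
      Fintype.card_units]
  have hζ := hgen.pow_of_dvd (Nat.div_pos (Nat.le_of_dvd (Nat.pos_of_ne_zero hN) hk) hk0).ne'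
    (Nat.div_dvd_of_dvd hk)
  rw [Nat.div_div_self hk hN] at hζ
  calc #{x : F | x ^ k = 1} = #(nthRootsFinset k (1 : F)) := by
        congr 1; ext x; simp [mem_nthRootsFinset hk0]
    _ = k := hζ.card_nthRootsFinset

section Field

variable {F : Type*} [Field F] {m : ℕ}

@[simp]
lemma trM_zero : trM m (0 : F) = 0 := by simp [trM]

@[simp]
lemma trN_zero : trN m (0 : F) = 0 := by simp [trN]

@[simp]
lemma eps_zero [DecidableEq F] : eps (0 : F) = 1 := if_pos rfl

lemma pow_two_pow_eq_inv {u : F} (hu : u ^ (2 ^ m + 1) = 1) : u ^ 2 ^ m = u⁻¹ :=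
  eq_inv_of_mul_eq_one_left (by rwa [← pow_succ])

lemma mul_pow_two_pow_add_one {s u : F} (hs : s ^ 2 ^ m = s) (hu : u ^ (2 ^ m + 1) = 1) :
    (s * u) ^ (2 ^ m + 1) = s ^ 2 := by
  rw [mul_pow, hu, mul_one, pow_succ, hs, sq]

end Field

section CharTwo

variable {F : Type*} [Field F] [CharP F 2] {m : ℕ}

lemma trM_add (x y : F) : trM m (x + y) = trM m x + trM m y := by
  simp only [trM, add_pow_char_pow, sum_add_distrib]

lemma trN_eq_trM_add_pow (x : F) : trN m x = trM m (x + x ^ 2 ^ m) := by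
  rw [trM_add, trN, trM, trM, two_mul, sum_range_add]
  congr 1
  exact sum_congr rfl fun i _ => by rw [pow_add, pow_mul]

lemma trM_sq (y : F) : trM m y ^ 2 = trM m (y ^ 2) := by
  simp only [trM, sum_pow_char, ← pow_mul, mul_comm]

omit [CharP F 2] in
lemma trM_sq_of_pow_eq {y : F} (hy : y ^ 2 ^ m = y) : trM m (y ^ 2) = trM m y := by
  have h := (sum_range_succ' (fun i => y ^ 2 ^ i) m).symm.trans
    (sum_range_succ (fun i => y ^ 2 ^ i) m)
  simp only [pow_zero, pow_one, hy, add_left_inj] at h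
  simpa only [trM, ← pow_mul, ← pow_succ'] using h

lemma trM_eq_zero_or_one {y : F} (hy : y ^ 2 ^ m = y) : trM m y = 0 ∨ trM m y = 1 :=
  IsIdempotentElem.iff_eq_zero_or_one.mp <| by
    rw [IsIdempotentElem, ← sq, trM_sq, trM_sq_of_pow_eq hy]

lemma eps_add_one [DecidableEq F] {a : F} (ha : a = 0 ∨ a = 1) : eps (a + 1) = -eps a := by
  rcases ha with rfl | rfl <;> simp [eps, CharTwo.add_self_eq_zero]

lemma add_inv_pow_two_pow {u : F} (hu : u ^ (2 ^ m + 1) = 1) :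
    (u + u⁻¹) ^ 2 ^ m = u + u⁻¹ := by
  rw [add_pow_char_pow, pow_two_pow_eq_inv hu, inv_pow, pow_two_pow_eq_inv hu, inv_inv, add_comm]

lemma add_inv_ne_one (hmeven : Even m) {u : F} (hu : u ^ (2 ^ m + 1) = 1) :
    u + u⁻¹ ≠ 1 := by
  have hu0 : u ≠ 0 := by rintro rfl; simp at hu
  intro h
  have hsq : u ^ 2 = u + 1 := by
    have := congrArg (· * u) h
    simp only [add_mul, inv_mul_cancel₀ hu0, one_mul] at this
    linear_combination this - CharTwo.two_eq_zero (R := F)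
  have hcube : u ^ 3 = 1 := by
    linear_combination (u + 1) * hsq + u * CharTwo.two_eq_zero (R := F)
  -- `2 ^ m + 1 ≡ 2 [MOD 3]` for even `m`, so `u ^ 3 = 1` turns `hu` into `u ^ 2 = 1`.
  have hmod : (2 ^ m + 1) % 3 = 2 := by
    obtain ⟨k, rfl⟩ := hmeven
    rw [← two_mul, pow_mul, Nat.add_mod, Nat.pow_mod]
    norm_num
  rw [pow_eq_pow_mod _ hcube, hmod, hsq] at hu
  exact hu0 (by simpa using hu)

lemma fFun_mul {l μ : F} (hl : l + l ^ 2 ^ m = 1) (hμ : μ ^ 2 ^ m = μ) {s u : F}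
    (hs : s ^ 2 ^ m = s) (hs0 : s ≠ 0) (hu : u ^ (2 ^ m + 1) = 1) :
    fFun m l μ (s * u) = trM m s + trM m (s * (u + u⁻¹)) * trM m (μ * (u + u⁻¹) ^ 2) := by
  have hu0 : u ≠ 0 := by rintro rfl; simp at hu
  have hq : (s * u) ^ 2 ^ m = s * u⁻¹ := by rw [mul_pow, hs, pow_two_pow_eq_inv hu]
  have hconj : (s * u) ^ (2 ^ m - 1) = u⁻¹ ^ 2 := by
    rw [pow_sub₀ _ (mul_ne_zero hs0 hu0) Nat.one_le_two_pow, hq]; field_simp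
  have hquad : trN m (l * (s * u) ^ (2 ^ m + 1)) = trM m s := by
    rw [mul_pow_two_pow_add_one hs hu, trN_eq_trM_add_pow, mul_pow, ← pow_mul, mul_comm 2,
      pow_mul, hs, ← add_mul, hl, one_mul, trM_sq_of_pow_eq hs]
  have hlin : trN m (s * u) = trM m (s * (u + u⁻¹)) := by
    rw [trN_eq_trM_add_pow, hq, mul_add]
  have hμterm : trN m (μ * (s * u) ^ (2 ^ m - 1)) = trM m (μ * (u + u⁻¹) ^ 2) := by
    rw [hconj, trN_eq_trM_add_pow, mul_pow, hμ, ← pow_mul, mul_comm 2, pow_mul,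
      inv_pow u (2 ^ m), pow_two_pow_eq_inv hu, inv_inv, ← mul_add, add_pow_char, add_comm]
  rw [fFun, hquad, hlin, hμterm]

end CharTwo

def subfieldK (m : ℕ) (F : Type*) [Field F] [Fintype F] [DecidableEq F] : Finset F :=
  {x | x ^ 2 ^ m = x}

def unitCircle (m : ℕ) (F : Type*) [Field F] [Fintype F] [DecidableEq F] : Finset F :=
  {x | x ^ (2 ^ m + 1) = 1}

section FiniteField

variable {F : Type*} [Field F] [Fintype F] {m : ℕ}

lemma pos_of_card_eq_two_pow (hcard : Fintype.card F = 2 ^ (2 * m)) : 0 < m := by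
  by_contra! h
  have := Fintype.one_lt_card (α := F)
  simp_all

omit [Field F] in
lemma card_sub_one_eq_mul (hcard : Fintype.card F = 2 ^ (2 * m)) :
    Fintype.card F - 1 = (2 ^ m + 1) * (2 ^ m - 1) := by
  rw [hcard, pow_mul', ← Nat.sq_sub_sq, one_pow]

variable [DecidableEq F]

@[simp]
lemma mem_subfieldK {x : F} : x ∈ subfieldK m F ↔ x ^ 2 ^ m = x := by simp [subfieldK]

@[simp]
lemma mem_unitCircle {x : F} : x ∈ unitCircle m F ↔ x ^ (2 ^ m + 1) = 1 := by simp [unitCircle]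

lemma zero_mem_subfieldK : (0 : F) ∈ subfieldK m F := by simp

lemma card_unitCircle (hcard : Fintype.card F = 2 ^ (2 * m)) : #(unitCircle m F) = 2 ^ m + 1 :=
  card_filter_pow_eq_one ⟨_, card_sub_one_eq_mul hcard⟩

lemma subfieldK_erase_zero (hm : 0 < m) :
    (subfieldK m F).erase 0 = ({x | x ^ (2 ^ m - 1) = 1} : Finset F) := by
  have h2m : 1 ≤ 2 ^ m := Nat.one_le_two_pow
  ext x
  simp only [mem_erase, mem_subfieldK, mem_filter, mem_univ, true_and]
  constructor
  · rintro ⟨hx0, hx⟩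
    rw [pow_sub₀ _ hx0 h2m, hx, pow_one, mul_inv_cancel₀ hx0]
  · intro hx
    have hx0 : x ≠ 0 := by
      rintro rfl
      simp [Nat.sub_eq_zero_iff_le, Nat.one_lt_two_pow hm.ne'] at hx
    exact ⟨hx0, by rw [← Nat.sub_add_cancel h2m, pow_succ, hx, one_mul]⟩

lemma card_subfieldK_erase_zero (hcard : Fintype.card F = 2 ^ (2 * m)) :
    #((subfieldK m F).erase 0) = 2 ^ m - 1 := by
  rw [subfieldK_erase_zero (pos_of_card_eq_two_pow hcard)]
  exact card_filter_pow_eq_one ⟨_, (card_sub_one_eq_mul hcard).trans (mul_comm _ _)⟩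

lemma card_subfieldK (hcard : Fintype.card F = 2 ^ (2 * m)) : #(subfieldK m F) = 2 ^ m := by
  rw [← card_erase_add_one zero_mem_subfieldK, card_subfieldK_erase_zero hcard,
    Nat.sub_add_cancel Nat.one_le_two_pow]

end FiniteField

section FiniteFieldCharTwo

variable {F : Type*} [Field F] [Fintype F] [DecidableEq F] [CharP F 2] {m : ℕ}

open Polynomial in
lemma exists_mem_subfieldK_trM_eq_one (hcard : Fintype.card F = 2 ^ (2 * m)) :
    ∃ y ∈ subfieldK m F, trM m y = 1 := by
  have hm := pos_of_card_eq_two_pow hcard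
  by_contra! h
  -- otherwise the polynomial `∑ X ^ 2 ^ i` of degree `2 ^ (m - 1)` vanishes on all of `K`
  set P : F[X] := ∑ i ∈ range m, X ^ 2 ^ i
  have hP0 : P ≠ 0 := fun h0 => by
    have := congrArg (coeff · 1) h0
    simp [P, coeff_X_pow, eq_comm (a := 1), hm] at this
  have hroots : (subfieldK m F).val ⊆ P.roots := fun y hy => by
    rw [mem_val, mem_subfieldK] at hy
    rw [mem_roots hP0, IsRoot, eval_finsetSum]
    simpa [trM] using (trM_eq_zero_or_one hy).resolve_right (h y (mem_subfieldK.mpr hy))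
  have hdeg : P.natDegree ≤ 2 ^ (m - 1) := natDegree_sum_le_of_forall_le _ _ fun i hi => by
    rw [natDegree_X_pow]
    exact Nat.pow_le_pow_right two_pos (by simp at hi; omega)
  have hcardK := (card_le_degree_of_subset_roots hroots).trans hdeg
  rw [card_subfieldK hcard] at hcardK
  exact absurd hcardK (Nat.pow_lt_pow_right one_lt_two (by omega)).not_ge

lemma sum_subfieldK_eps_trM_mul (hcard : Fintype.card F = 2 ^ (2 * m)) {c : F}
    (hc : c ∈ subfieldK m F) (hc0 : c ≠ 0) : ∑ s ∈ subfieldK m F, eps (trM m (c * s)) = 0 := by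
  obtain ⟨y, hy, hy1⟩ := exists_mem_subfieldK_trM_eq_one hcard
  rw [mem_subfieldK] at hc hy
  have hd0 : y / c ≠ 0 := div_ne_zero (by rintro rfl; simp at hy1) hc0
  have hshift : ∀ s, trM m (c * (s + y / c)) = trM m (c * s) + 1 := fun s => by
    rw [mul_add, mul_div_cancel₀ _ hc0, trM_add, hy1]
  refine sum_involution (fun s _ => s + y / c) (fun s hs => ?_) (fun s _ _ => ?_)
    (fun s hs => ?_) (fun s _ => ?_)
  · have hcs : (c * s) ^ 2 ^ m = c * s := by rw [mul_pow, hc, mem_subfieldK.mp hs]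
    rw [hshift, eps_add_one (trM_eq_zero_or_one hcs), add_neg_cancel]
  · simpa using hd0
  · rw [mem_subfieldK] at hs ⊢
    rw [add_pow_char_pow, hs, div_pow, hy, hc]
  · rw [add_assoc, CharTwo.add_self_eq_zero, add_zero]

lemma sum_subfieldK_erase_zero_eps_trM_mul (hcard : Fintype.card F = 2 ^ (2 * m)) {c : F}
    (hc : c ∈ subfieldK m F) (hc0 : c ≠ 0) :
    ∑ s ∈ (subfieldK m F).erase 0, eps (trM m (c * s)) = -1 := by
  have h := sum_subfieldK_eps_trM_mul hcard hc hc0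
  rw [← add_sum_erase _ _ zero_mem_subfieldK] at h
  rw [mul_zero, trM_zero, eps_zero] at h
  omega

lemma injOn_mul_subfieldK_unitCircle :
    Set.InjOn (fun p : F × F => p.1 * p.2) ↑(((subfieldK m F).erase 0) ×ˢ unitCircle m F) := by
  rintro ⟨s, u⟩ hsu ⟨s', u'⟩ hsu' h
  simp only [coe_product, Set.mem_prod, mem_coe, mem_erase, mem_subfieldK,
    mem_unitCircle] at hsu hsu' h
  have hs : s = s' := CharTwo.sq_injective <| show s ^ 2 = s' ^ 2 by
    rw [← mul_pow_two_pow_add_one hsu.1.2 hsu.2, ← mul_pow_two_pow_add_one hsu'.1.2 hsu'.2, h]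
  subst hs
  rw [mul_left_cancel₀ hsu.1.1 h]

lemma image_mul_subfieldK_unitCircle (hcard : Fintype.card F = 2 ^ (2 * m)) :
    (((subfieldK m F).erase 0) ×ˢ unitCircle m F).image (fun p => p.1 * p.2) = univ.erase 0 := by
  refine eq_of_subset_of_card_le (fun x hx => ?_) ?_
  · obtain ⟨⟨s, u⟩, hsu, rfl⟩ := mem_image.mp hx
    simp only [mem_product, mem_erase, mem_unitCircle] at hsu
    have hu0 : u ≠ 0 := by rintro rfl; simp at hsu
    exact mem_erase.mpr ⟨mul_ne_zero hsu.1.1 hu0, mem_univ _⟩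
  · rw [card_image_of_injOn injOn_mul_subfieldK_unitCircle, card_product,
      card_subfieldK_erase_zero hcard, card_unitCircle hcard, card_erase_of_mem (mem_univ _),
      card_univ, card_sub_one_eq_mul hcard, mul_comm]

lemma sum_erase_zero_eq_sum_unitCircle {M : Type*} [AddCommMonoid M]
    (hcard : Fintype.card F = 2 ^ (2 * m)) (g : F → M) :
    ∑ x ∈ univ.erase 0, g x = ∑ u ∈ unitCircle m F, ∑ s ∈ (subfieldK m F).erase 0, g (s * u) := by
  rw [← image_mul_subfieldK_unitCircle hcard, sum_image injOn_mul_subfieldK_unitCircle,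
    sum_product_right]

lemma sum_subfieldK_erase_zero_eps_fFun_mul (hcard : Fintype.card F = 2 ^ (2 * m))
    (hmeven : Even m) {l μ : F} (hl : l + l ^ 2 ^ m = 1) (hμ : μ ^ 2 ^ m = μ) {u : F}
    (hu : u ∈ unitCircle m F) :
    ∑ s ∈ (subfieldK m F).erase 0, eps (fFun m l μ (s * u)) = -1 := by
  rw [mem_unitCircle] at hu
  set t := u + u⁻¹
  have ht : t ^ 2 ^ m = t := add_inv_pow_two_pow hu
  have hμt : (μ * t ^ 2) ^ 2 ^ m = μ * t ^ 2 := by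
    rw [mul_pow, hμ, ← pow_mul, mul_comm 2, pow_mul, ht]
  obtain ⟨c, hc, hc0, hf⟩ : ∃ c ∈ subfieldK m F, c ≠ 0 ∧
      ∀ s ∈ (subfieldK m F).erase 0, fFun m l μ (s * u) = trM m (c * s) := by
    rcases trM_eq_zero_or_one hμt with h0 | h1
    · refine ⟨1, by simp, one_ne_zero, fun s hs => ?_⟩
      rw [mem_erase, mem_subfieldK] at hs
      rw [fFun_mul hl hμ hs.2 hs.1 hu, h0, mul_zero, add_zero, one_mul]
    · refine ⟨1 + t, by rw [mem_subfieldK, add_pow_char_pow, one_pow, ht], ?_, fun s hs => ?_⟩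
      · rw [Ne, CharTwo.add_eq_zero]
        exact (add_inv_ne_one hmeven hu).symm
      · rw [mem_erase, mem_subfieldK] at hs
        rw [fFun_mul hl hμ hs.2 hs.1 hu, h1, mul_one, ← trM_add, add_mul, one_mul, mul_comm]
  rw [sum_congr rfl fun s hs => congrArg eps (hf s hs)]
  exact sum_subfieldK_erase_zero_eps_trM_mul hcard hc hc0

end FiniteFieldCharTwo

theorem stmt10_general (m : ℕ) (F : Type*) [Field F] [Fintype F] [DecidableEq F]
    (hcard : Fintype.card F = 2 ^ (2 * m))
    (l : F) (hl : l + l ^ (2 ^ m) = 1)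
    (μ : F) (hμK : μ ^ (2 ^ m) = μ)
    (hmeven : Even m) :
    walsh m (fFun m l μ) 0 = -(2 ^ m : ℤ) := by
  have : CharP F 2 := charP_of_card_eq_prime_pow hcard
  have hf0 : fFun m l μ 0 = 0 := by simp [fFun]
  calc walsh m (fFun m l μ) 0
      = eps (fFun m l μ 0) + ∑ x ∈ univ.erase 0, eps (fFun m l μ x) := by
        rw [add_sum_erase _ (fun x => eps (fFun m l μ x)) (mem_univ 0)]
        simp [walsh]
    _ = 1 + ∑ u ∈ unitCircle m F, ∑ s ∈ (subfieldK m F).erase 0, eps (fFun m l μ (s * u)) := by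
        rw [hf0, eps_zero, sum_erase_zero_eq_sum_unitCircle hcard]
    _ = 1 + ∑ u ∈ unitCircle m F, (-1) := by
        rw [sum_congr rfl fun u hu =>
          sum_subfieldK_erase_zero_eps_fFun_mul hcard hmeven hl hμK hu]
    _ = -(2 ^ m : ℤ) := by
        simp [card_unitCircle hcard]

theorem stmt10 (m : ℕ) (hm : 0 < m) (F : Type*) [Field F] [Fintype F] [DecidableEq F]
    (hcard : Fintype.card F = 2 ^ (2 * m))
    (l : F) (hl : l + l ^ (2 ^ m) = 1)
    (μ : F) (hμK : μ ^ (2 ^ m) = μ) (hμ0 : μ ≠ 0)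
    (hmeven : Even m) :
    walsh m (fFun m l μ) 0 = -(2 ^ m : ℤ) :=
  stmt10_general m F hcard l hl μ hμK hmeven
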